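/- arXiv:1711.03701 — 2 statements merged into one kernel-verified Lean document; each statement's English description precedes it below -/
import Mathlib

section
/- (Unbiasedness of the kernel-smoothed estimator) Under the additive matrix model, if all diagonal entries of A are equal (so A_{ii} = tr(A)/m for all i), then for every t₀ ∈ [0,1] the kernel-smoothed estimator satisfies E[Ŝ_m(t₀)] = Σ_{i=1}^m w_i(t₀) B(i/m) = B̃(t₀). -/
open MeasureTheory ProbabilityTheory Matrix Real Filter Asymptotics
open scoped Kronecker

noncomputable section

/-- The spectral (`ℓ²`-operator) norm of a real square matrix. -/
def l2OpNorm {k : Type*} [Fintype k] [DecidableEq k] (M : Matrix k k ℝ) : ℝ :=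
  ‖Matrix.toEuclideanCLM (𝕜 := ℝ) M‖

/-- The Euclidean (`ℓ²`) norm of a finitely indexed real vector. -/
def euclNorm {ι : Type*} [Fintype ι] (w : ι → ℝ) : ℝ :=
  Real.sqrt (∑ i, w i ^ 2)

/-- The Frobenius norm of a real matrix. -/
def frobNorm {a b : Type*} [Fintype a] [Fintype b] (M : Matrix a b ℝ) : ℝ :=
  Real.sqrt (∑ i, ∑ j, M i j ^ 2)

/-- The elementwise maximum norm of a real square matrix. -/
def maxNorm {a : Type*} [Fintype a] (M : Matrix a a ℝ) : ℝ :=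
  ⨆ p : a × a, |M p.1 p.2|

/-!
Each column `xᵢ` of `X` is a fixed linear image `Cᵢ w` of the vector `w` stacking all entries of
`Z₁` and `Z₂`. These entries are pairwise independent, centred and of unit variance, so
`𝔼[w wᵀ] = I` and hence `𝔼[xᵢ xᵢᵀ] = Cᵢ Cᵢᵀ = (A^{1/2} A^{1/2})ᵢᵢ I + B(i/m)^{1/2} B(i/m)^{1/2}
= Aᵢᵢ I + B(i/m)`. When `Aᵢᵢ = tr(A)/m` the centring term of the estimator cancels the first
summand, and linearity of expectation gives `𝔼[Ŝₘ(t₀)] = B̃(t₀)`.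
-/

namespace Matrix

variable {ι κ κ' : Type*} [Fintype ι]

theorem mulVec_apply_mul_mulVec_apply (C : Matrix κ ι ℝ) (D : Matrix κ' ι ℝ) (v : ι → ℝ)
    (j : κ) (k : κ') :
    (C *ᵥ v) j * (D *ᵥ v) k = ∑ p, ∑ q, C j p * D k q * (v p * v q) := by
  simp only [mulVec, dotProduct, Finset.sum_mul_sum]
  exact Finset.sum_congr rfl fun p _ => Finset.sum_congr rfl fun q _ => by ring

end Matrix

section Isotropic

variable {Ω ι κ κ' : Type*} [MeasurableSpace Ω] {μ : Measure Ω} [DecidableEq ι]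

def IsIsotropic (μ : Measure Ω) (W : ι → Ω → ℝ) : Prop :=
  (∀ p q, Integrable (fun ω => W p ω * W q ω) μ) ∧
    ∀ p q, ∫ ω, W p ω * W q ω ∂μ = (1 : Matrix ι ι ℝ) p q

theorem isIsotropic_of_pairwise_indepFun {W : ι → Ω → ℝ}
    (hmeas : ∀ p, AEStronglyMeasurable (W p) μ) (hmean : ∀ p, ∫ ω, W p ω ∂μ = 0)
    (hvar : ∀ p, ∫ ω, W p ω ^ 2 ∂μ = 1) (hindep : Pairwise fun p q => IndepFun (W p) (W q) μ) :
    IsIsotropic μ W := by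
  have hL2 : ∀ p, MemLp (W p) 2 μ := fun p =>
    (memLp_two_iff_integrable_sq (hmeas p)).2 (.of_integral_ne_zero (by simp [hvar p]))
  refine ⟨fun p q => (hL2 p).integrable_mul (hL2 q), fun p q => ?_⟩
  rcases eq_or_ne p q with rfl | hpq
  · simpa [sq] using hvar p
  · simpa [hpq, hmean] using (hindep hpq).integral_mul_eq_mul_integral (hmeas p) (hmeas q)

variable [Fintype ι] {W : ι → Ω → ℝ}

theorem IsIsotropic.integrable_mulVec_apply_mul_mulVec_apply (hW : IsIsotropic μ W)
    (C : Matrix κ ι ℝ) (D : Matrix κ' ι ℝ) (j : κ) (k : κ') :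
    Integrable (fun ω => (C *ᵥ fun p => W p ω) j * (D *ᵥ fun p => W p ω) k) μ := by
  simp only [mulVec_apply_mul_mulVec_apply]
  exact integrable_finsetSum _ fun p _ => integrable_finsetSum _ fun q _ =>
    (hW.1 p q).const_mul _

theorem IsIsotropic.integral_mulVec_apply_mul_mulVec_apply (hW : IsIsotropic μ W)
    (C : Matrix κ ι ℝ) (D : Matrix κ' ι ℝ) (j : κ) (k : κ') :
    ∫ ω, (C *ᵥ fun p => W p ω) j * (D *ᵥ fun p => W p ω) k ∂μ = (C * Dᵀ) j k := by
  simp only [mulVec_apply_mul_mulVec_apply]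
  rw [integral_finsetSum _ fun p _ => integrable_finsetSum _ fun q _ => (hW.1 p q).const_mul _]
  simp_rw [integral_finsetSum _ fun q _ => (hW.1 _ q).const_mul _, integral_const_mul, hW.2]
  simp [mul_apply, one_apply]

end Isotropic

section AdditiveModel

variable {α β : Type*} [Fintype α] [Fintype β] [DecidableEq α] [DecidableEq β]

def stackEntries (Z₁ Z₂ : Matrix α β ℝ) : (α × β) ⊕ (α × β) → ℝ :=
  Sum.elim (fun q => Z₁ q.1 q.2) (fun q => Z₂ q.1 q.2)

def additiveModel (Z₁ Z₂ : Matrix α β ℝ) (M : Matrix β β ℝ) (S : β → Matrix α α ℝ) :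
    Matrix α β ℝ :=
  Z₁ * M + of fun l i => (S i *ᵥ fun a => Z₂ a i) l

def columnCoeff (M : Matrix β β ℝ) (S : Matrix α α ℝ) (i : β) :
    Matrix α ((α × β) ⊕ (α × β)) ℝ :=
  fromCols (of fun l q => if q.1 = l then M q.2 i else 0)
    (of fun l q => if q.2 = i then S l q.1 else 0)

theorem additiveModel_col_eq_columnCoeff_mulVec (Z₁ Z₂ : Matrix α β ℝ) (M : Matrix β β ℝ)
    (S : β → Matrix α α ℝ) (i : β) :
    (fun l => additiveModel Z₁ Z₂ M S l i) = columnCoeff M (S i) i *ᵥ stackEntries Z₁ Z₂ := by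
  ext l
  simp [additiveModel, stackEntries, columnCoeff, mulVec, dotProduct, mul_apply,
    Fintype.sum_prod_type, mul_comm]

theorem columnCoeff_mul_transpose (M : Matrix β β ℝ) (S : Matrix α α ℝ) (i : β) :
    columnCoeff M S i * (columnCoeff M S i)ᵀ = (Mᵀ * M) i i • 1 + S * Sᵀ := by
  ext j k
  simp [columnCoeff, transpose_fromCols, mul_apply, one_apply, Fintype.sum_prod_type, ite_mul,
    mul_ite, eq_comm (a := k)]

variable {Ω : Type*} [MeasurableSpace Ω] {μ : Measure Ω} {Z₁ Z₂ : Ω → Matrix α β ℝ}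

theorem IsIsotropic.integrable_additiveModel_mul
    (hW : IsIsotropic μ fun p ω => stackEntries (Z₁ ω) (Z₂ ω) p)
    (M : Matrix β β ℝ) (S : β → Matrix α α ℝ) (i : β) (j k : α) :
    Integrable (fun ω =>
      additiveModel (Z₁ ω) (Z₂ ω) M S j i * additiveModel (Z₁ ω) (Z₂ ω) M S k i) μ := by
  simpa only [← additiveModel_col_eq_columnCoeff_mulVec] using
    hW.integrable_mulVec_apply_mul_mulVec_apply (columnCoeff M (S i) i)
      (columnCoeff M (S i) i) j k

theorem IsIsotropic.integral_additiveModel_mul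
    (hW : IsIsotropic μ fun p ω => stackEntries (Z₁ ω) (Z₂ ω) p)
    (M : Matrix β β ℝ) (S : β → Matrix α α ℝ) (i : β) (j k : α) :
    ∫ ω, additiveModel (Z₁ ω) (Z₂ ω) M S j i * additiveModel (Z₁ ω) (Z₂ ω) M S k i ∂μ =
      (Mᵀ * M) i i * (1 : Matrix α α ℝ) j k + (S i * (S i)ᵀ) j k := by
  simpa [← additiveModel_col_eq_columnCoeff_mulVec, columnCoeff_mul_transpose] using
    hW.integral_mulVec_apply_mul_mulVec_apply (columnCoeff M (S i) i)
      (columnCoeff M (S i) i) j k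

end AdditiveModel

theorem natCast_succ_div_mem_Icc {m : ℕ} (i : Fin m) :
    ((i : ℕ) + 1 : ℝ) / m ∈ Set.Icc (0 : ℝ) 1 :=
  ⟨by positivity, div_le_one_of_le₀ (by exact_mod_cast i.2) m.cast_nonneg⟩

theorem kernel_estimator_unbiased_general
    (Ω : Type) [MeasurableSpace Ω] (μ : Measure Ω) [IsProbabilityMeasure μ]
    (m n : ℕ)
    (A : Matrix (Fin m) (Fin m) ℝ)
    (B : ℝ → Matrix (Fin n) (Fin n) ℝ)
    (Asqrt : Matrix (Fin m) (Fin m) ℝ)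
    (hAsqrt : Asqrt.PosSemidef ∧ Asqrt * Asqrt = A)
    (Bsqrt : ℝ → Matrix (Fin n) (Fin n) ℝ)
    (hBsqrt : ∀ t, t ∈ Set.Icc (0:ℝ) 1 → (Bsqrt t).PosSemidef ∧ Bsqrt t * Bsqrt t = B t)
    (Z1 Z2 : Ω → Matrix (Fin n) (Fin m) ℝ)
    (hmeas1 : ∀ j i, Measurable fun ω => Z1 ω j i)
    (hmeas2 : ∀ j i, Measurable fun ω => Z2 ω j i)
    (hmean1 : ∀ j i, ∫ ω, Z1 ω j i ∂μ = 0)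
    (hmean2 : ∀ j i, ∫ ω, Z2 ω j i ∂μ = 0)
    (hvar1 : ∀ j i, ∫ ω, (Z1 ω j i) ^ 2 ∂μ = 1)
    (hvar2 : ∀ j i, ∫ ω, (Z2 ω j i) ^ 2 ∂μ = 1)
    (hindep : iIndepFun
      (fun p : (Fin n × Fin m) ⊕ (Fin n × Fin m) => fun ω =>
        Sum.elim (fun q => Z1 ω q.1 q.2) (fun q => Z2 ω q.1 q.2) p) μ)
    (X : Ω → Matrix (Fin n) (Fin m) ℝ)
    (hX : ∀ ω, X ω = Z1 ω * Asqrt +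
      Matrix.of fun (j : Fin n) (i : Fin m) =>
        (Bsqrt (((i : ℕ) + 1 : ℝ) / m)).mulVec (fun k => Z2 ω k i) j)
    (hdiag : ∀ i, A i i = A.trace / m)
    (Kker : ℝ → ℝ)
    (h t₀ : ℝ) :
    ∀ j k : Fin n,
      (∫ ω, (∑ i : Fin m, (1 / (m * h) * Kker ((((i : ℕ) + 1 : ℝ) / m - t₀) / h)) *
          (X ω j i * X ω k i - A.trace / m * (if j = k then (1 : ℝ) else 0))) ∂μ)
        = ∑ i : Fin m, (1 / (m * h) * Kker ((((i : ℕ) + 1 : ℝ) / m - t₀) / h)) * B (((i : ℕ) + 1 : ℝ) / m) j k := by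
  intro j k
  have hXmodel : ∀ ω, X ω = additiveModel (Z1 ω) (Z2 ω) Asqrt
      fun i => Bsqrt (((i : ℕ) + 1 : ℝ) / m) := hX
  have hW : IsIsotropic μ fun p ω => stackEntries (Z1 ω) (Z2 ω) p :=
    isIsotropic_of_pairwise_indepFun
      (Sum.forall.2 ⟨fun q => (hmeas1 q.1 q.2).aestronglyMeasurable,
        fun q => (hmeas2 q.1 q.2).aestronglyMeasurable⟩)
      (Sum.forall.2 ⟨fun q => hmean1 q.1 q.2, fun q => hmean2 q.1 q.2⟩)
      (Sum.forall.2 ⟨fun q => hvar1 q.1 q.2, fun q => hvar2 q.1 q.2⟩)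
      fun _ _ hpq => hindep.indepFun hpq
  have hint : ∀ i, Integrable (fun ω => X ω j i * X ω k i) μ := fun i => by
    simpa only [hXmodel] using hW.integrable_additiveModel_mul Asqrt _ i j k
  have hsecond : ∀ i, ∫ ω, X ω j i * X ω k i ∂μ =
      A.trace / m * (if j = k then 1 else 0) + B (((i : ℕ) + 1 : ℝ) / m) j k := fun i => by
    obtain ⟨hBpsd, hBsq⟩ := hBsqrt _ (natCast_succ_div_mem_Icc i)
    simp only [hXmodel]
    rw [hW.integral_additiveModel_mul, (isHermitian_iff_isSymm.1 hAsqrt.1.isHermitian).eq,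
      (isHermitian_iff_isSymm.1 hBpsd.isHermitian).eq, hAsqrt.2, hBsq, hdiag, one_apply]
  rw [integral_finsetSum]
  · refine Finset.sum_congr rfl fun i _ => ?_
    rw [integral_const_mul, integral_sub (hint i) (integrable_const _), integral_const,
      probReal_univ, one_smul, hsecond, add_sub_cancel_left]
  · exact fun i _ => ((hint i).sub (integrable_const _)).const_mul _

/-- Unbiasedness of the kernel-smoothed estimator. -/
theorem kernel_estimator_unbiased
    (Ω : Type) [MeasurableSpace Ω] (μ : Measure Ω) [IsProbabilityMeasure μ]
    (m n : ℕ) (hm : 1 ≤ m) (hn : 1 ≤ n)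
    (A : Matrix (Fin m) (Fin m) ℝ) (hA : A.PosDef)
    (B : ℝ → Matrix (Fin n) (Fin n) ℝ)
    (hB : ∀ t, t ∈ Set.Icc (0:ℝ) 1 → (B t).PosDef)
    (Asqrt : Matrix (Fin m) (Fin m) ℝ)
    (hAsqrt : Asqrt.PosSemidef ∧ Asqrt * Asqrt = A)
    (Bsqrt : ℝ → Matrix (Fin n) (Fin n) ℝ)
    (hBsqrt : ∀ t, t ∈ Set.Icc (0:ℝ) 1 → (Bsqrt t).PosSemidef ∧ Bsqrt t * Bsqrt t = B t)
    (Z1 Z2 : Ω → Matrix (Fin n) (Fin m) ℝ)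
    (hmeas1 : ∀ j i, Measurable fun ω => Z1 ω j i)
    (hmeas2 : ∀ j i, Measurable fun ω => Z2 ω j i)
    (hmean1 : ∀ j i, ∫ ω, Z1 ω j i ∂μ = 0)
    (hmean2 : ∀ j i, ∫ ω, Z2 ω j i ∂μ = 0)
    (hvar1 : ∀ j i, ∫ ω, (Z1 ω j i) ^ 2 ∂μ = 1)
    (hvar2 : ∀ j i, ∫ ω, (Z2 ω j i) ^ 2 ∂μ = 1)
    (hindep : iIndepFun
      (fun p : (Fin n × Fin m) ⊕ (Fin n × Fin m) => fun ω =>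
        Sum.elim (fun q => Z1 ω q.1 q.2) (fun q => Z2 ω q.1 q.2) p) μ)
    (X : Ω → Matrix (Fin n) (Fin m) ℝ)
    (hX : ∀ ω, X ω = Z1 ω * Asqrt +
      Matrix.of fun (j : Fin n) (i : Fin m) =>
        (Bsqrt (((i : ℕ) + 1 : ℝ) / m)).mulVec (fun k => Z2 ω k i) j)
    (hdiag : ∀ i, A i i = A.trace / m)
    (Kker : ℝ → ℝ) (hKpos : ∀ u, 0 ≤ Kker u)
    (h t₀ : ℝ) (hh : 0 < h) (ht₀ : t₀ ∈ Set.Icc (0:ℝ) 1) :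
    ∀ j k : Fin n,
      (∫ ω, (∑ i : Fin m, (1 / (m * h) * Kker ((((i : ℕ) + 1 : ℝ) / m - t₀) / h)) *
          (X ω j i * X ω k i - A.trace / m * (if j = k then (1 : ℝ) else 0))) ∂μ)
        = ∑ i : Fin m, (1 / (m * h) * Kker ((((i : ℕ) + 1 : ℝ) / m - t₀) / h)) * B (((i : ℕ) + 1 : ℝ) / m) j k :=
  kernel_estimator_unbiased_general Ω μ m n A B Asqrt hAsqrt Bsqrt hBsqrt Z1 Z2 hmeas1 hmeas2 hmean1
    hmean2 hvar1 hvar2 hindep X hX hdiag Kker h t₀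
end
end

section
/- (Unbiasedness of the trace estimator) Under the additive matrix model, suppose tr(B(t)) = tr(B) is constant in t, and define tr̂(B) = Σ_{i=1}^m (1/m)‖x_i‖₂² − (n/m) tr(A), where x_i is the i-th column of X. Then E[tr̂(B)] = tr(B). -/
open MeasureTheory ProbabilityTheory Matrix Real Filter Asymptotics
open scoped Kronecker

noncomputable section

/-! Each entry `x_{ji}` of `X` is a fixed linear combination of the independent standardized
entries of `Z₁` and `Z₂`, namely `∑ₖ (Z₁)_{jk} (A^{1/2})_{ki} + ∑ₖ B(tᵢ)^{1/2}_{jk} (Z₂)_{ki}`.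
These entries are orthonormal in `L²`, so `E[x_{ji}²]` is the sum of the squared coefficients,
which for symmetric square roots is `A_{ii} + B(tᵢ)_{jj}`. Summing over `j` gives
`E‖xᵢ‖² = n A_{ii} + tr B`, and averaging over the columns leaves `(n/m) tr A + tr B`. -/

lemma Matrix.IsSymm.sum_apply_sq {k R : Type*} [Fintype k] [CommSemiring R] {S : Matrix k k R}
    (hS : S.IsSymm) (i : k) : ∑ j, S i j ^ 2 = (S * S) i i := by
  simp only [mul_apply, sq, hS.apply i]

section SecondMoments

variable {Ω ι : Type*} [MeasurableSpace Ω] {μ : Measure Ω}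

lemma memLp_two_of_integral_sq_ne_zero {f : Ω → ℝ} (hf : AEStronglyMeasurable f μ)
    (h : ∫ ω, f ω ^ 2 ∂μ ≠ 0) : MemLp f 2 μ :=
  (memLp_two_iff_integrable_sq hf).2 (Integrable.of_integral_ne_zero h)

lemma integral_mul_eq_ite_of_pairwise_indepFun [DecidableEq ι] {W : ι → Ω → ℝ}
    (hW : ∀ e, AEStronglyMeasurable (W e) μ) (hmean : ∀ e, ∫ ω, W e ω ∂μ = 0)
    (hvar : ∀ e, ∫ ω, W e ω ^ 2 ∂μ = 1) (hind : Pairwise fun e e' => IndepFun (W e) (W e') μ)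
    (e e' : ι) : ∫ ω, W e ω * W e' ω ∂μ = if e = e' then 1 else 0 := by
  split_ifs with h
  · subst h
    simpa only [sq] using hvar e
  · rw [(hind h).integral_fun_mul_eq_mul_integral (hW e) (hW e'), hmean e, zero_mul]

lemma integral_sum_mul_sq_of_orthonormal [Fintype ι] [DecidableEq ι] {W : ι → Ω → ℝ}
    (hW : ∀ e, MemLp (W e) 2 μ)
    (horth : ∀ e e', ∫ ω, W e ω * W e' ω ∂μ = if e = e' then 1 else 0) (a : ι → ℝ) :
    ∫ ω, (∑ e, a e * W e ω) ^ 2 ∂μ = ∑ e, a e ^ 2 := by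
  have hint : ∀ e e', Integrable (fun ω => a e * a e' * (W e ω * W e' ω)) μ := fun e e' =>
    ((hW e).integrable_mul (hW e') (p := 2) (q := 2)).const_mul _
  calc ∫ ω, (∑ e, a e * W e ω) ^ 2 ∂μ
      = ∫ ω, ∑ e, ∑ e', a e * a e' * (W e ω * W e' ω) ∂μ := by
        congr 1 with ω
        rw [sq, Finset.sum_mul_sum]
        exact Finset.sum_congr rfl fun e _ => Finset.sum_congr rfl fun e' _ => by ring
    _ = ∑ e, ∑ e', a e * a e' * (if e = e' then 1 else 0) := by
        rw [integral_finsetSum _ fun e _ => integrable_finsetSum _ fun e' _ => hint e e']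
        refine Finset.sum_congr rfl fun e _ => ?_
        rw [integral_finsetSum _ fun e' _ => hint e e']
        simp only [integral_const_mul, horth]
    _ = ∑ e, a e ^ 2 := by simp [sq]

lemma integral_sq_add_entry_of_orthonormal {p q : Type*} [Fintype p] [Fintype q]
    [DecidableEq p] [DecidableEq q] {W : (p × q) ⊕ (p × q) → Ω → ℝ}
    (hW : ∀ e, MemLp (W e) 2 μ)
    (horth : ∀ e e', ∫ ω, W e ω * W e' ω ∂μ = if e = e' then 1 else 0)
    (P : Matrix q q ℝ) (Q : Matrix p p ℝ) (j : p) (i : q) :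
    ∫ ω, (∑ k, W (.inl (j, k)) ω * P k i + ∑ k, Q j k * W (.inr (k, i)) ω) ^ 2 ∂μ
      = ∑ k, P k i ^ 2 + ∑ k, Q j k ^ 2 := by
  let f : q ⊕ p → (p × q) ⊕ (p × q) := Sum.map (Prod.mk j) (·, i)
  have hf : f.Injective :=
    Sum.map_injective.2 ⟨Prod.mk_right_injective j, Prod.mk_left_injective i⟩
  have := integral_sum_mul_sq_of_orthonormal (W := fun e => W (f e)) (fun e => hW (f e))
    (fun e e' => by simp only [horth, hf.eq_iff]) (Sum.elim (P · i) (Q j))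
  simpa [Fintype.sum_sum_type, f, mul_comm] using this

lemma integral_trace_estimator_of_integral_sq [IsProbabilityMeasure μ] {m n : ℕ} (hm : m ≠ 0)
    {X : Ω → Matrix (Fin n) (Fin m) ℝ} (hint : ∀ j i, Integrable (fun ω => X ω j i ^ 2) μ)
    (A : Matrix (Fin m) (Fin m) ℝ) {D : Fin m → Fin n → ℝ} {τ : ℝ}
    (hmom : ∀ j i, ∫ ω, X ω j i ^ 2 ∂μ = A i i + D i j) (hD : ∀ i, ∑ j, D i j = τ) :
    ∫ ω, ((∑ i : Fin m, (1 / (m : ℝ)) * ∑ j : Fin n, (X ω j i) ^ 2)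
        - (n / m : ℝ) * A.trace) ∂μ = τ := by
  have hcol : ∀ i, Integrable (fun ω => ∑ j, X ω j i ^ 2) μ := fun i =>
    integrable_finsetSum _ fun j _ => hint j i
  have hcol_integral : ∀ i, ∫ ω, ∑ j, X ω j i ^ 2 ∂μ = n * A i i + τ := fun i => by
    rw [integral_finsetSum _ fun j _ => hint j i, ← hD i]
    simp only [hmom, Finset.sum_add_distrib, Finset.sum_const, Finset.card_univ,
      Fintype.card_fin, nsmul_eq_mul]
  have hm0 : (m : ℝ) ≠ 0 := Nat.cast_ne_zero.2 hm
  rw [integral_sub (integrable_finsetSum _ fun i _ => (hcol i).const_mul _) (integrable_const _),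
    integral_finsetSum _ fun i _ => (hcol i).const_mul _]
  simp only [integral_const_mul, hcol_integral, integral_const, probReal_univ, one_smul,
    ← Finset.mul_sum, Finset.sum_add_distrib, Finset.sum_const, Finset.card_univ,
    Fintype.card_fin, nsmul_eq_mul, trace, diag]
  field_simp
  ring

end SecondMoments

theorem trace_estimator_unbiased_general
    (Ω : Type) [MeasurableSpace Ω] (μ : Measure Ω) [IsProbabilityMeasure μ]
    (m n : ℕ) (hm : 1 ≤ m)
    (A : Matrix (Fin m) (Fin m) ℝ)
    (B : ℝ → Matrix (Fin n) (Fin n) ℝ)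
    (Asqrt : Matrix (Fin m) (Fin m) ℝ)
    (hAsqrt : Asqrt.PosSemidef ∧ Asqrt * Asqrt = A)
    (Bsqrt : ℝ → Matrix (Fin n) (Fin n) ℝ)
    (hBsqrt : ∀ t, t ∈ Set.Icc (0:ℝ) 1 → (Bsqrt t).PosSemidef ∧ Bsqrt t * Bsqrt t = B t)
    (Z1 Z2 : Ω → Matrix (Fin n) (Fin m) ℝ)
    (hmeas1 : ∀ j i, Measurable fun ω => Z1 ω j i)
    (hmeas2 : ∀ j i, Measurable fun ω => Z2 ω j i)
    (hmean1 : ∀ j i, ∫ ω, Z1 ω j i ∂μ = 0)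
    (hmean2 : ∀ j i, ∫ ω, Z2 ω j i ∂μ = 0)
    (hvar1 : ∀ j i, ∫ ω, (Z1 ω j i) ^ 2 ∂μ = 1)
    (hvar2 : ∀ j i, ∫ ω, (Z2 ω j i) ^ 2 ∂μ = 1)
    (hindep : iIndepFun
      (fun p : (Fin n × Fin m) ⊕ (Fin n × Fin m) => fun ω =>
        Sum.elim (fun q => Z1 ω q.1 q.2) (fun q => Z2 ω q.1 q.2) p) μ)
    (X : Ω → Matrix (Fin n) (Fin m) ℝ)
    (hX : ∀ ω, X ω = Z1 ω * Asqrt +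
      Matrix.of fun (j : Fin n) (i : Fin m) =>
        (Bsqrt (((i : ℕ) + 1 : ℝ) / m)).mulVec (fun k => Z2 ω k i) j)
    (τ : ℝ) (htr : ∀ t, t ∈ Set.Icc (0:ℝ) 1 → (B t).trace = τ) :
    ∫ ω, ((∑ i : Fin m, (1 / (m : ℝ)) * ∑ j : Fin n, (X ω j i) ^ 2)
        - (n / m : ℝ) * A.trace) ∂μ = τ := by
  set W : (Fin n × Fin m) ⊕ (Fin n × Fin m) → Ω → ℝ := fun p ω =>
    Sum.elim (fun q => Z1 ω q.1 q.2) (fun q => Z2 ω q.1 q.2) p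
  have hmeas : ∀ e, Measurable (W e) := by
    rintro (⟨j, i⟩ | ⟨j, i⟩); exacts [hmeas1 j i, hmeas2 j i]
  have hmean : ∀ e, ∫ ω, W e ω ∂μ = 0 := by
    rintro (⟨j, i⟩ | ⟨j, i⟩); exacts [hmean1 j i, hmean2 j i]
  have hvar : ∀ e, ∫ ω, W e ω ^ 2 ∂μ = 1 := by
    rintro (⟨j, i⟩ | ⟨j, i⟩); exacts [hvar1 j i, hvar2 j i]
  have hW : ∀ e, MemLp (W e) 2 μ := fun e =>
    memLp_two_of_integral_sq_ne_zero (hmeas e).aestronglyMeasurable (by simp [hvar e])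
  have horth := integral_mul_eq_ite_of_pairwise_indepFun (fun e => (hmeas e).aestronglyMeasurable)
    hmean hvar fun e e' h => hindep.indepFun h
  set t : Fin m → ℝ := fun i => ((i : ℕ) + 1 : ℝ) / m
  have ht : ∀ i, t i ∈ Set.Icc (0:ℝ) 1 := fun i =>
    ⟨by positivity, div_le_one_of_le₀ (by exact_mod_cast i.2) (Nat.cast_nonneg m)⟩
  have hXentry : ∀ ω j i, X ω j i =
      ∑ k, W (.inl (j, k)) ω * Asqrt k i + ∑ k, Bsqrt (t i) j k * W (.inr (k, i)) ω := by
    simp [hX, W, t, mul_apply, mulVec, dotProduct]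
  refine integral_trace_estimator_of_integral_sq (D := fun i j => B (t i) j j) (by omega)
    (fun j i => ?_) A (fun j i => ?_) fun i => htr (t i) (ht i)
  · simp only [hXentry]
    exact ((memLp_finsetSum _ fun k _ => (hW _).mul_const _).add
      (memLp_finsetSum _ fun k _ => (hW _).const_mul _)).integrable_sq
  · obtain ⟨hBpsd, hBsq⟩ := hBsqrt (t i) (ht i)
    have hAsymm : Asqrt.IsSymm := isHermitian_iff_isSymm.1 hAsqrt.1.isHermitian
    have hBsymm : (Bsqrt (t i)).IsSymm := isHermitian_iff_isSymm.1 hBpsd.isHermitian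
    simp only [hXentry]
    rw [integral_sq_add_entry_of_orthonormal hW horth]
    simp only [hAsymm.apply i, hAsymm.sum_apply_sq, hBsymm.sum_apply_sq, hAsqrt.2, hBsq]

/-- Unbiasedness of the trace estimator. -/
theorem trace_estimator_unbiased
    (Ω : Type) [MeasurableSpace Ω] (μ : Measure Ω) [IsProbabilityMeasure μ]
    (m n : ℕ) (hm : 1 ≤ m) (hn : 1 ≤ n)
    (A : Matrix (Fin m) (Fin m) ℝ) (hA : A.PosDef)
    (B : ℝ → Matrix (Fin n) (Fin n) ℝ)
    (hB : ∀ t, t ∈ Set.Icc (0:ℝ) 1 → (B t).PosDef)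
    (Asqrt : Matrix (Fin m) (Fin m) ℝ)
    (hAsqrt : Asqrt.PosSemidef ∧ Asqrt * Asqrt = A)
    (Bsqrt : ℝ → Matrix (Fin n) (Fin n) ℝ)
    (hBsqrt : ∀ t, t ∈ Set.Icc (0:ℝ) 1 → (Bsqrt t).PosSemidef ∧ Bsqrt t * Bsqrt t = B t)
    (Z1 Z2 : Ω → Matrix (Fin n) (Fin m) ℝ)
    (hmeas1 : ∀ j i, Measurable fun ω => Z1 ω j i)
    (hmeas2 : ∀ j i, Measurable fun ω => Z2 ω j i)
    (hmean1 : ∀ j i, ∫ ω, Z1 ω j i ∂μ = 0)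
    (hmean2 : ∀ j i, ∫ ω, Z2 ω j i ∂μ = 0)
    (hvar1 : ∀ j i, ∫ ω, (Z1 ω j i) ^ 2 ∂μ = 1)
    (hvar2 : ∀ j i, ∫ ω, (Z2 ω j i) ^ 2 ∂μ = 1)
    (hindep : iIndepFun
      (fun p : (Fin n × Fin m) ⊕ (Fin n × Fin m) => fun ω =>
        Sum.elim (fun q => Z1 ω q.1 q.2) (fun q => Z2 ω q.1 q.2) p) μ)
    (X : Ω → Matrix (Fin n) (Fin m) ℝ)
    (hX : ∀ ω, X ω = Z1 ω * Asqrt +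
      Matrix.of fun (j : Fin n) (i : Fin m) =>
        (Bsqrt (((i : ℕ) + 1 : ℝ) / m)).mulVec (fun k => Z2 ω k i) j)
    (τ : ℝ) (htr : ∀ t, t ∈ Set.Icc (0:ℝ) 1 → (B t).trace = τ) :
    ∫ ω, ((∑ i : Fin m, (1 / (m : ℝ)) * ∑ j : Fin n, (X ω j i) ^ 2)
        - (n / m : ℝ) * A.trace) ∂μ = τ :=
  trace_estimator_unbiased_general Ω μ m n hm A B Asqrt hAsqrt Bsqrt hBsqrt Z1 Z2 hmeas1 hmeas2
    hmean1 hmean2 hvar1 hvar2 hindep X hX τ htr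
end
end
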